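/- arXiv:2311.02200 — 2 statements merged into one kernel-verified Lean document; each statement's English description precedes it below -/
import Mathlib

section
/- Let μ be a functional assigning a positive real μ(τ,ρ) to each bounded interval τ ⊂ ℝ of positive length and each positive measurable function ρ on τ, and suppose μ satisfies Constancy and Geometric Averaging. Let τ be a bounded interval of positive length partitioned into finitely many consecutive intervals τ₁, …, τ_N of positive lengths, and let s be the step function equal to the constant s_n > 0 on τ_n for each n. Then |τ| · ln μ(τ,s) = ∑_{n=1}^{N} |τ_n| · ln s_n = ∫_τ ln s(t) dt. -/
/-! Taking logarithms turns Geometric Averaging into additivity of `(b - a) * log μ(a, b, ρ)` over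
adjacent intervals. Splitting `τ` at the partition points therefore gives
`∑ₙ |τₙ| log μ(τₙ, s)`, and Constancy evaluates each term as `|τₙ| log sₙ`, which is also the
integral of the step function `log s` over `τₙ`. -/

open MeasureTheory

/-- Constancy: μ of a function constant equal to `c > 0` on the interval equals `c`. -/
def Constancy (μ : ℝ → ℝ → (ℝ → ℝ) → ℝ) : Prop :=
  ∀ (a b : ℝ) (ρ : ℝ → ℝ) (c : ℝ), a < b → Measurable ρ →
    (∀ t ∈ Set.Ioo a b, 0 < ρ t) →
    0 < c → (∀ t ∈ Set.Ioo a b, ρ t = c) → μ a b ρ = c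

/-- Geometric averaging for two-part partitions: splitting `(a,b)` at an interior
point `m`. -/
def GeomAvg (μ : ℝ → ℝ → (ℝ → ℝ) → ℝ) : Prop :=
  ∀ (a m b : ℝ) (ρ : ℝ → ℝ), a < m → m < b → Measurable ρ →
    (∀ t ∈ Set.Ioo a b, 0 < ρ t) →
    μ a b ρ ^ (b - a) = μ a m ρ ^ (m - a) * μ m b ρ ^ (b - m)

open Set

lemma monotoneOn_Iic_of_le_succ {α : Type*} [Preorder α] {t : ℕ → α} {N : ℕ}
    (ht : ∀ n < N, t n ≤ t (n + 1)) : MonotoneOn t (Iic N) :=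
  monotoneOn_of_le_add_one ordConnected_Iic fun n _ _ hn ↦ ht n hn

lemma intervalIntegrable_and_integral_eq_of_eqOn_Ioo {f : ℝ → ℝ} {a b c : ℝ} (hab : a ≤ b)
    (hf : EqOn f (fun _ ↦ c) (Ioo a b)) :
    IntervalIntegrable f volume a b ∧ ∫ x in a..b, f x = (b - a) * c := by
  constructor
  · rw [intervalIntegrable_iff_integrableOn_Ioo_of_le hab,
      integrableOn_congr_fun hf measurableSet_Ioo]
    exact integrableOn_const measure_Ioo_lt_top.ne
  · rw [intervalIntegral.integral_of_le hab, integral_Ioc_eq_integral_Ioo,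
      setIntegral_congr_fun measurableSet_Ioo hf, setIntegral_const,
      Real.volume_real_Ioo_of_le hab, smul_eq_mul]

lemma setIntegral_Ioo_eq_sum_of_step {f : ℝ → ℝ} {N : ℕ} {t c : ℕ → ℝ}
    (ht : ∀ n < N, t n ≤ t (n + 1)) (hf : ∀ n < N, EqOn f (fun _ ↦ c n) (Ioo (t n) (t (n + 1)))) :
    ∫ x in Ioo (t 0) (t N), f x = ∑ n ∈ Finset.range N, (t (n + 1) - t n) * c n := by
  have hpiece n (hn : n < N) := intervalIntegrable_and_integral_eq_of_eqOn_Ioo (ht n hn) (hf n hn)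
  have h0N : t 0 ≤ t N :=
    monotoneOn_Iic_of_le_succ ht N.zero_le self_mem_Iic N.zero_le
  rw [← integral_Ioc_eq_integral_Ioo, ← intervalIntegral.integral_of_le h0N,
    ← intervalIntegral.sum_integral_adjacent_intervals fun n hn ↦ (hpiece n hn).1]
  exact Finset.sum_congr rfl fun n hn ↦ (hpiece n (Finset.mem_range.mp hn)).2

section GeometricAveraging

variable {μ : ℝ → ℝ → (ℝ → ℝ) → ℝ} (hGA : GeomAvg μ)
  (hpos : ∀ (a b : ℝ) (ρ : ℝ → ℝ), a < b → Measurable ρ →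
    (∀ t ∈ Ioo a b, 0 < ρ t) → 0 < μ a b ρ)
include hGA hpos

lemma mul_log_add_mul_log_of_geomAvg {a m b : ℝ} {ρ : ℝ → ℝ} (ham : a ≤ m) (hmb : m ≤ b)
    (hρ : Measurable ρ) (hρpos : ∀ x ∈ Ioo a b, 0 < ρ x) :
    (b - a) * Real.log (μ a b ρ) =
      (m - a) * Real.log (μ a m ρ) + (b - m) * Real.log (μ m b ρ) := by
  rcases ham.eq_or_lt with rfl | ham
  · simp
  rcases hmb.eq_or_lt with rfl | hmb
  · simp
  have hpos_ab := hpos a b ρ (ham.trans hmb) hρ hρpos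
  have hpos_am := hpos a m ρ ham hρ fun x hx ↦ hρpos x ⟨hx.1, hx.2.trans hmb⟩
  have hpos_mb := hpos m b ρ hmb hρ fun x hx ↦ hρpos x ⟨ham.trans hx.1, hx.2⟩
  have := congrArg Real.log (hGA a m b ρ ham hmb hρ hρpos)
  rwa [Real.log_mul (Real.rpow_pos_of_pos hpos_am _).ne' (Real.rpow_pos_of_pos hpos_mb _).ne',
    Real.log_rpow hpos_ab, Real.log_rpow hpos_am, Real.log_rpow hpos_mb] at this

lemma mul_log_eq_sum_of_geomAvg {N : ℕ} {t : ℕ → ℝ} {ρ : ℝ → ℝ}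
    (ht : ∀ n < N, t n ≤ t (n + 1)) (hρ : Measurable ρ)
    (hρpos : ∀ x ∈ Ioo (t 0) (t N), 0 < ρ x) :
    (t N - t 0) * Real.log (μ (t 0) (t N) ρ) =
      ∑ n ∈ Finset.range N, (t (n + 1) - t n) * Real.log (μ (t n) (t (n + 1)) ρ) := by
  induction N with
  | zero => simp
  | succ N ih =>
    have hmono := monotoneOn_Iic_of_le_succ ht
    have h0N : t 0 ≤ t N := hmono N.succ.zero_le N.le_succ N.zero_le
    have hNN : t N ≤ t (N + 1) := ht N N.lt_succ_self
    rw [mul_log_add_mul_log_of_geomAvg hGA hpos h0N hNN hρ hρpos, Finset.sum_range_succ,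
      ih (fun n hn ↦ ht n (Nat.lt_succ_of_lt hn)) fun x hx ↦ hρpos x ⟨hx.1, hx.2.trans_le hNN⟩]

end GeometricAveraging

theorem mu_of_step_function_general (μ : ℝ → ℝ → (ℝ → ℝ) → ℝ)
    (hC : Constancy μ) (hGA : GeomAvg μ)
    (hpos : ∀ (a b : ℝ) (ρ : ℝ → ℝ), a < b → Measurable ρ →
      (∀ t ∈ Set.Ioo a b, 0 < ρ t) → 0 < μ a b ρ)
    (N : ℕ) (t : ℕ → ℝ) (ht : ∀ n < N, t n < t (n + 1))
    (sv : ℕ → ℝ) (hsv : ∀ n < N, 0 < sv n)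
    (s : ℝ → ℝ) (hms : Measurable s)
    (hstep : ∀ n < N, ∀ x ∈ Set.Ioo (t n) (t (n + 1)), s x = sv n)
    (hspos : ∀ x ∈ Set.Ioo (t 0) (t N), 0 < s x) :
    (t N - t 0) * Real.log (μ (t 0) (t N) s) =
        ∑ n ∈ Finset.range N, (t (n + 1) - t n) * Real.log (sv n) ∧
    ∑ n ∈ Finset.range N, (t (n + 1) - t n) * Real.log (sv n) =
        ∫ x in Set.Ioo (t 0) (t N), Real.log (s x) := by
  have ht' n (hn : n < N) := (ht n hn).le
  have hμ_piece n (hn : n < N) : μ (t n) (t (n + 1)) s = sv n :=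
    hC _ _ s _ (ht n hn) hms (fun x hx ↦ hstep n hn x hx ▸ hsv n hn) (hsv n hn) (hstep n hn)
  refine ⟨?_, ?_⟩
  · rw [mul_log_eq_sum_of_geomAvg hGA hpos ht' hms hspos]
    exact Finset.sum_congr rfl fun n hn ↦ by rw [hμ_piece n (Finset.mem_range.mp hn)]
  · refine (setIntegral_Ioo_eq_sum_of_step ht' fun n hn x hx ↦ ?_).symm
    simp only [hstep n hn x hx]

/-- For a functional satisfying Constancy and Geometric Averaging, and a positive
step function `s` with value `sv n` on the `n`-th subinterval of a finite partition,
`|τ| ln μ(τ,s) = ∑ₙ |τₙ| ln sₙ = ∫_τ ln s`. -/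
theorem mu_of_step_function (μ : ℝ → ℝ → (ℝ → ℝ) → ℝ)
    (hC : Constancy μ) (hGA : GeomAvg μ)
    (hpos : ∀ (a b : ℝ) (ρ : ℝ → ℝ), a < b → Measurable ρ →
      (∀ t ∈ Set.Ioo a b, 0 < ρ t) → 0 < μ a b ρ)
    (N : ℕ) (hN : 1 ≤ N) (t : ℕ → ℝ) (ht : ∀ n < N, t n < t (n + 1))
    (sv : ℕ → ℝ) (hsv : ∀ n < N, 0 < sv n)
    (s : ℝ → ℝ) (hms : Measurable s)
    (hstep : ∀ n < N, ∀ x ∈ Set.Ioo (t n) (t (n + 1)), s x = sv n)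
    (hspos : ∀ x ∈ Set.Ioo (t 0) (t N), 0 < s x) :
    (t N - t 0) * Real.log (μ (t 0) (t N) s) =
        ∑ n ∈ Finset.range N, (t (n + 1) - t n) * Real.log (sv n) ∧
    ∑ n ∈ Finset.range N, (t (n + 1) - t n) * Real.log (sv n) =
        ∫ x in Set.Ioo (t 0) (t N), Real.log (s x) :=
  mu_of_step_function_general μ hC hGA hpos N t ht sv hsv s hms hstep hspos
end

section
/- Fix σ_p > 0, ω ≠ 0, and an open interval I = (t_k, t_{k+1}). Suppose v : I → ℝ, λ = (λ₁, λ₂) : I → ℝ², and x = (x₁, x₂) : I → ℝ² are differentiable and satisfy, for all t ∈ I: −v(t)/σ_p² + λ₂(t) = 0; λ₁'(t) = ω² λ₂(t) and λ₂'(t) = −λ₁(t); x₁'(t) = x₂(t) and x₂'(t) = −ω² x₁(t) + v(t). Then there exist constants c₁, c₂, c₃, c₄ ∈ ℝ such that for all t ∈ I, x₁(t) = (c₁ t + c₂) sin(ωt) + (c₃ t + c₄) cos(ωt), with x₂ = x₁', v = x₁'' + ω² x₁, λ₂ = v/σ_p², and λ₁ = −λ₂'. Conversely, for any constants c₁, c₂,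 c₃, c₄ ∈ ℝ, setting x₁(t) = (c₁ t + c₂) sin(ωt) + (c₃ t + c₄) cos(ωt), x₂ = x₁', v = x₁'' + ω² x₁, λ₂ = v/σ_p², and λ₁ = −λ₂' defines a solution of the system on I. -/
/-!
The costate `λ₂` satisfies `λ₂'' = -ω² λ₂`, so it is a free oscillation `A cos ωt + B sin ωt`,
and so is the input `v = σ² λ₂`. This input is in resonance with the oscillator, so `x₁` is a
free oscillation plus the secular particular solution `t (c₁ sin ωt + c₃ cos ωt)`. Free
oscillations are detected by the two coordinates of `(f, f' / ω)` in the frame rotating with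
angular velocity `ω`, which have zero derivative and are therefore constant on an interval.
-/

open Real Set

theorem hasDerivAt_sin_mul (ω t : ℝ) :
    HasDerivAt (fun s => sin (ω * s)) (ω * cos (ω * t)) t := by
  simpa [mul_comm] using ((hasDerivAt_id t).const_mul ω).sin

theorem hasDerivAt_cos_mul (ω t : ℝ) :
    HasDerivAt (fun s => cos (ω * s)) (-ω * sin (ω * t)) t := by
  simpa [mul_comm] using ((hasDerivAt_id t).const_mul ω).cos

theorem IsOpen.exists_eq_const_of_hasDerivAt_zero {𝕜 G : Type*} [RCLike 𝕜]
    [NormedAddCommGroup G] [NormedSpace 𝕜 G] {s : Set 𝕜} (hs : IsOpen s)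
    (hs' : IsPreconnected s) {f : 𝕜 → G} (hf : ∀ t ∈ s, HasDerivAt f 0 t) :
    ∃ a, ∀ t ∈ s, f t = a :=
  hs.exists_is_const_of_deriv_eq_zero hs'
    (fun t ht => (hf t ht).differentiableAt.differentiableWithinAt) (fun t ht => (hf t ht).deriv)

theorem IsOpen.exists_cos_sin_of_hasDerivAt {s : Set ℝ} (hs : IsOpen s) (hs' : IsPreconnected s)
    {ω : ℝ} (hω : ω ≠ 0) {f f' : ℝ → ℝ} (hf : ∀ t ∈ s, HasDerivAt f (f' t) t)
    (hf' : ∀ t ∈ s, HasDerivAt f' (-(ω ^ 2 * f t)) t) :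
    ∃ A B : ℝ, ∀ t ∈ s, f t = A * cos (ω * t) + B * sin (ω * t) ∧
      f' t = ω * (B * cos (ω * t) - A * sin (ω * t)) := by
  obtain ⟨A, hA⟩ := hs.exists_eq_const_of_hasDerivAt_zero hs'
    (f := fun t => f t * cos (ω * t) - f' t / ω * sin (ω * t)) fun t ht =>
      (((hf t ht).mul (hasDerivAt_cos_mul ω t)).sub
        (((hf' t ht).div_const ω).mul (hasDerivAt_sin_mul ω t))).congr_deriv
        (by field_simp; ring)
  obtain ⟨B, hB⟩ := hs.exists_eq_const_of_hasDerivAt_zero hs'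
    (f := fun t => f t * sin (ω * t) + f' t / ω * cos (ω * t)) fun t ht =>
      (((hf t ht).mul (hasDerivAt_sin_mul ω t)).add
        (((hf' t ht).div_const ω).mul (hasDerivAt_cos_mul ω t))).congr_deriv
        (by field_simp; ring)
  refine ⟨A, B, fun t ht => ?_⟩
  rw [← hA t ht, ← hB t ht]
  have pyth := sin_sq_add_cos_sq (ω * t)
  constructor
  · linear_combination (-f t) * pyth
  · field_simp
    linear_combination (-f' t) * pyth

noncomputable section ModifiedHarmonic

variable (ω c₁ c₂ c₃ c₄ : ℝ)

def modifiedHarmonic (t : ℝ) : ℝ :=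
  (c₁ * t + c₂) * sin (ω * t) + (c₃ * t + c₄) * cos (ω * t)

def modifiedHarmonicDeriv (t : ℝ) : ℝ :=
  c₁ * sin (ω * t) + ω * (c₁ * t + c₂) * cos (ω * t) +
    c₃ * cos (ω * t) - ω * (c₃ * t + c₄) * sin (ω * t)

/-- The input `v = x₁'' + ω² x₁` that drives the oscillator along a modified harmonic. -/
def modifiedHarmonicInput (t : ℝ) : ℝ :=
  2 * ω * c₁ * cos (ω * t) - 2 * ω * c₃ * sin (ω * t)

theorem hasDerivAt_modifiedHarmonic (t : ℝ) :
    HasDerivAt (modifiedHarmonic ω c₁ c₂ c₃ c₄) (modifiedHarmonicDeriv ω c₁ c₂ c₃ c₄ t) t := by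
  have hline (a b : ℝ) : HasDerivAt (fun s => a * s + b) a t := by
    simpa using ((hasDerivAt_id t).const_mul a).add_const b
  exact (((hline c₁ c₂).mul (hasDerivAt_sin_mul ω t)).add
    ((hline c₃ c₄).mul (hasDerivAt_cos_mul ω t))).congr_deriv
    (by unfold modifiedHarmonicDeriv; ring)

theorem hasDerivAt_modifiedHarmonicDeriv (t : ℝ) :
    HasDerivAt (modifiedHarmonicDeriv ω c₁ c₂ c₃ c₄)
      (-ω ^ 2 * modifiedHarmonic ω c₁ c₂ c₃ c₄ t + modifiedHarmonicInput ω c₁ c₃ t) t := by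
  have hline (a b : ℝ) : HasDerivAt (fun s => ω * (a * s + b)) (ω * a) t := by
    simpa using (((hasDerivAt_id t).const_mul a).add_const b).const_mul ω
  have hsin := hasDerivAt_sin_mul ω t
  have hcos := hasDerivAt_cos_mul ω t
  exact ((((hsin.const_mul c₁).add ((hline c₁ c₂).mul hcos)).add (hcos.const_mul c₃)).sub
    ((hline c₃ c₄).mul hsin)).congr_deriv (by unfold modifiedHarmonic modifiedHarmonicInput; ring)

theorem hasDerivAt_modifiedHarmonicInput (t : ℝ) :
    HasDerivAt (modifiedHarmonicInput ω c₁ c₃)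
      (-(2 * ω ^ 2 * c₁ * sin (ω * t) + 2 * ω ^ 2 * c₃ * cos (ω * t))) t :=
  (((hasDerivAt_cos_mul ω t).const_mul (2 * ω * c₁)).sub
    ((hasDerivAt_sin_mul ω t).const_mul (2 * ω * c₃))).congr_deriv (by ring)

theorem hasDerivAt_neg_deriv_modifiedHarmonicInput (t : ℝ) :
    HasDerivAt (fun s => 2 * ω ^ 2 * c₁ * sin (ω * s) + 2 * ω ^ 2 * c₃ * cos (ω * s))
      (ω ^ 2 * modifiedHarmonicInput ω c₁ c₃ t) t :=
  (((hasDerivAt_sin_mul ω t).const_mul (2 * ω ^ 2 * c₁)).add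
    ((hasDerivAt_cos_mul ω t).const_mul (2 * ω ^ 2 * c₃))).congr_deriv
    (by unfold modifiedHarmonicInput; ring)

end ModifiedHarmonic

theorem IsOpen.exists_modifiedHarmonic_of_hasDerivAt {s : Set ℝ} (hs : IsOpen s)
    (hs' : IsPreconnected s) {ω : ℝ} (hω : ω ≠ 0) (c₁ c₃ : ℝ) {x₁ x₂ : ℝ → ℝ}
    (hx₁ : ∀ t ∈ s, HasDerivAt x₁ (x₂ t) t)
    (hx₂ : ∀ t ∈ s, HasDerivAt x₂ (-ω ^ 2 * x₁ t + modifiedHarmonicInput ω c₁ c₃ t) t) :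
    ∃ c₂ c₄ : ℝ, ∀ t ∈ s, x₁ t = modifiedHarmonic ω c₁ c₂ c₃ c₄ t ∧
      x₂ t = modifiedHarmonicDeriv ω c₁ c₂ c₃ c₄ t := by
  -- subtracting a particular solution leaves a free harmonic oscillation
  obtain ⟨A, B, hAB⟩ := hs.exists_cos_sin_of_hasDerivAt hs' hω
    (f := fun t => x₁ t - modifiedHarmonic ω c₁ 0 c₃ 0 t)
    (fun t ht => (hx₁ t ht).sub (hasDerivAt_modifiedHarmonic ω c₁ 0 c₃ 0 t))
    (fun t ht => ((hx₂ t ht).sub (hasDerivAt_modifiedHarmonicDeriv ω c₁ 0 c₃ 0 t)).congr_deriv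
      (by ring))
  refine ⟨B, A, fun t ht => ?_⟩
  obtain ⟨h₁, h₂⟩ := hAB t ht
  unfold modifiedHarmonic modifiedHarmonicDeriv at *
  exact ⟨by linear_combination h₁, by linear_combination h₂⟩

theorem IsOpen.exists_modifiedHarmonic_of_optimality {s : Set ℝ} (hs : IsOpen s)
    (hs' : IsPreconnected s) {σ ω : ℝ} (hσ : σ ≠ 0) (hω : ω ≠ 0) {v lam₁ lam₂ x₁ x₂ : ℝ → ℝ}
    (hv : ∀ t ∈ s, -(v t) / σ ^ 2 + lam₂ t = 0)
    (hlam₁ : ∀ t ∈ s, HasDerivAt lam₁ (ω ^ 2 * lam₂ t) t)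
    (hlam₂ : ∀ t ∈ s, HasDerivAt lam₂ (-(lam₁ t)) t)
    (hx₁ : ∀ t ∈ s, HasDerivAt x₁ (x₂ t) t)
    (hx₂ : ∀ t ∈ s, HasDerivAt x₂ (-ω ^ 2 * x₁ t + v t) t) :
    ∃ c₁ c₂ c₃ c₄ : ℝ, ∀ t ∈ s,
      x₁ t = modifiedHarmonic ω c₁ c₂ c₃ c₄ t ∧ x₂ t = modifiedHarmonicDeriv ω c₁ c₂ c₃ c₄ t ∧
      v t = modifiedHarmonicInput ω c₁ c₃ t ∧ lam₂ t = modifiedHarmonicInput ω c₁ c₃ t / σ ^ 2 ∧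
      lam₁ t = (2 * ω ^ 2 * c₁ * sin (ω * t) + 2 * ω ^ 2 * c₃ * cos (ω * t)) / σ ^ 2 := by
  have hv' (t : ℝ) (ht : t ∈ s) : v t = σ ^ 2 * lam₂ t := by
    have := hv t ht
    field_simp at this
    linarith
  obtain ⟨A, B, hAB⟩ :=
    hs.exists_cos_sin_of_hasDerivAt hs' hω hlam₂ fun t ht => (hlam₁ t ht).neg
  obtain ⟨c₁, hc₁⟩ : ∃ c, 2 * ω * c = σ ^ 2 * A := ⟨σ ^ 2 * A / (2 * ω), by field_simp⟩
  obtain ⟨c₃, hc₃⟩ : ∃ c, 2 * ω * c = -(σ ^ 2 * B) :=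
    ⟨-(σ ^ 2 * B) / (2 * ω), by field_simp⟩
  have hinput (t : ℝ) (ht : t ∈ s) : v t = modifiedHarmonicInput ω c₁ c₃ t := by
    rw [hv' t ht, (hAB t ht).1, modifiedHarmonicInput]
    linear_combination (-cos (ω * t)) * hc₁ + sin (ω * t) * hc₃
  obtain ⟨c₂, c₄, hx⟩ := hs.exists_modifiedHarmonic_of_hasDerivAt hs' hω c₁ c₃ hx₁
    fun t ht => hinput t ht ▸ hx₂ t ht
  refine ⟨c₁, c₂, c₃, c₄, fun t ht => ⟨(hx t ht).1, (hx t ht).2, hinput t ht, ?_, ?_⟩⟩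
  · rw [← hinput t ht, hv' t ht]
    field_simp
  · have := (hAB t ht).2
    field_simp
    linear_combination (-σ ^ 2) * this - ω * sin (ω * t) * hc₁ - ω * cos (ω * t) * hc₃

theorem harmonic_oscillator_optimal_spline_general (σp ω tk tk1 : ℝ) (hσp : 0 < σp)
    (hω : ω ≠ 0) :
    -- forward direction: any solution of the system is a modified harmonic
    (∀ v lam1 lam2 x1 x2 : ℝ → ℝ,
      (∀ t ∈ Set.Ioo tk tk1, -(v t) / σp ^ 2 + lam2 t = 0) →
      (∀ t ∈ Set.Ioo tk tk1, HasDerivAt lam1 (ω ^ 2 * lam2 t) t) →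
      (∀ t ∈ Set.Ioo tk tk1, HasDerivAt lam2 (-(lam1 t)) t) →
      (∀ t ∈ Set.Ioo tk tk1, HasDerivAt x1 (x2 t) t) →
      (∀ t ∈ Set.Ioo tk tk1, HasDerivAt x2 (-ω ^ 2 * x1 t + v t) t) →
      ∃ c1 c2 c3 c4 : ℝ, ∀ t ∈ Set.Ioo tk tk1,
        x1 t = (c1 * t + c2) * Real.sin (ω * t) + (c3 * t + c4) * Real.cos (ω * t) ∧
        x2 t = c1 * Real.sin (ω * t) + ω * (c1 * t + c2) * Real.cos (ω * t) +
            c3 * Real.cos (ω * t) - ω * (c3 * t + c4) * Real.sin (ω * t) ∧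
        v t = 2 * ω * c1 * Real.cos (ω * t) - 2 * ω * c3 * Real.sin (ω * t) ∧
        lam2 t = (2 * ω * c1 * Real.cos (ω * t) - 2 * ω * c3 * Real.sin (ω * t)) / σp ^ 2 ∧
        lam1 t = (2 * ω ^ 2 * c1 * Real.sin (ω * t) + 2 * ω ^ 2 * c3 * Real.cos (ω * t)) / σp ^ 2) ∧
    -- converse: for any constants the explicit formulas solve the system
    (∀ c1 c2 c3 c4 : ℝ, ∀ t ∈ Set.Ioo tk tk1,
      -(2 * ω * c1 * Real.cos (ω * t) - 2 * ω * c3 * Real.sin (ω * t)) / σp ^ 2 +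
          (2 * ω * c1 * Real.cos (ω * t) - 2 * ω * c3 * Real.sin (ω * t)) / σp ^ 2 = 0 ∧
      HasDerivAt (fun s : ℝ =>
          (2 * ω ^ 2 * c1 * Real.sin (ω * s) + 2 * ω ^ 2 * c3 * Real.cos (ω * s)) / σp ^ 2)
        (ω ^ 2 * ((2 * ω * c1 * Real.cos (ω * t) - 2 * ω * c3 * Real.sin (ω * t)) / σp ^ 2)) t ∧
      HasDerivAt (fun s : ℝ =>
          (2 * ω * c1 * Real.cos (ω * s) - 2 * ω * c3 * Real.sin (ω * s)) / σp ^ 2)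
        (-((2 * ω ^ 2 * c1 * Real.sin (ω * t) + 2 * ω ^ 2 * c3 * Real.cos (ω * t)) / σp ^ 2)) t ∧
      HasDerivAt (fun s : ℝ =>
          (c1 * s + c2) * Real.sin (ω * s) + (c3 * s + c4) * Real.cos (ω * s))
        (c1 * Real.sin (ω * t) + ω * (c1 * t + c2) * Real.cos (ω * t) +
          c3 * Real.cos (ω * t) - ω * (c3 * t + c4) * Real.sin (ω * t)) t ∧
      HasDerivAt (fun s : ℝ =>
          c1 * Real.sin (ω * s) + ω * (c1 * s + c2) * Real.cos (ω * s) +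
            c3 * Real.cos (ω * s) - ω * (c3 * s + c4) * Real.sin (ω * s))
        (-ω ^ 2 * ((c1 * t + c2) * Real.sin (ω * t) + (c3 * t + c4) * Real.cos (ω * t)) +
          (2 * ω * c1 * Real.cos (ω * t) - 2 * ω * c3 * Real.sin (ω * t))) t) := by
  refine ⟨fun v lam1 lam2 x1 x2 hv hlam1 hlam2 hx1 hx2 =>
      isOpen_Ioo.exists_modifiedHarmonic_of_optimality isPreconnected_Ioo hσp.ne' hω
        hv hlam1 hlam2 hx1 hx2,
    fun c1 c2 c3 c4 t _ => ⟨by ring, ?_, ?_, hasDerivAt_modifiedHarmonic ω c1 c2 c3 c4 t,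
      hasDerivAt_modifiedHarmonicDeriv ω c1 c2 c3 c4 t⟩⟩
  · exact ((hasDerivAt_neg_deriv_modifiedHarmonicInput ω c1 c3 t).div_const (σp ^ 2)).congr_deriv
      (by rw [modifiedHarmonicInput, mul_div_assoc])
  · exact ((hasDerivAt_modifiedHarmonicInput ω c1 c3 t).div_const (σp ^ 2)).congr_deriv
      (neg_div _ _)

/-- For the stochastic harmonic oscillator, solutions of the optimality ODEs
`−v/σp² + λ₂ = 0`, `λ₁' = ω²λ₂`, `λ₂' = −λ₁`, `x₁' = x₂`, `x₂' = −ω²x₁ + v` on the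
open interval `(tk, tk1)` are exactly the modified harmonics
`x₁(t) = (c₁ t + c₂) sin ωt + (c₃ t + c₄) cos ωt`, with `x₂ = x₁'`,
`v = x₁'' + ω² x₁`, `λ₂ = v/σp²`, `λ₁ = −λ₂'`. -/
theorem harmonic_oscillator_optimal_spline (σp ω tk tk1 : ℝ) (hσp : 0 < σp)
    (hω : ω ≠ 0) (hlt : tk < tk1) :
    -- forward direction: any solution of the system is a modified harmonic
    (∀ v lam1 lam2 x1 x2 : ℝ → ℝ,
      (∀ t ∈ Set.Ioo tk tk1, -(v t) / σp ^ 2 + lam2 t = 0) →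
      (∀ t ∈ Set.Ioo tk tk1, HasDerivAt lam1 (ω ^ 2 * lam2 t) t) →
      (∀ t ∈ Set.Ioo tk tk1, HasDerivAt lam2 (-(lam1 t)) t) →
      (∀ t ∈ Set.Ioo tk tk1, HasDerivAt x1 (x2 t) t) →
      (∀ t ∈ Set.Ioo tk tk1, HasDerivAt x2 (-ω ^ 2 * x1 t + v t) t) →
      ∃ c1 c2 c3 c4 : ℝ, ∀ t ∈ Set.Ioo tk tk1,
        x1 t = (c1 * t + c2) * Real.sin (ω * t) + (c3 * t + c4) * Real.cos (ω * t) ∧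
        x2 t = c1 * Real.sin (ω * t) + ω * (c1 * t + c2) * Real.cos (ω * t) +
            c3 * Real.cos (ω * t) - ω * (c3 * t + c4) * Real.sin (ω * t) ∧
        v t = 2 * ω * c1 * Real.cos (ω * t) - 2 * ω * c3 * Real.sin (ω * t) ∧
        lam2 t = (2 * ω * c1 * Real.cos (ω * t) - 2 * ω * c3 * Real.sin (ω * t)) / σp ^ 2 ∧
        lam1 t = (2 * ω ^ 2 * c1 * Real.sin (ω * t) + 2 * ω ^ 2 * c3 * Real.cos (ω * t)) / σp ^ 2) ∧
    -- converse: for any constants the explicit formulas solve the system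
    (∀ c1 c2 c3 c4 : ℝ, ∀ t ∈ Set.Ioo tk tk1,
      -(2 * ω * c1 * Real.cos (ω * t) - 2 * ω * c3 * Real.sin (ω * t)) / σp ^ 2 +
          (2 * ω * c1 * Real.cos (ω * t) - 2 * ω * c3 * Real.sin (ω * t)) / σp ^ 2 = 0 ∧
      HasDerivAt (fun s : ℝ =>
          (2 * ω ^ 2 * c1 * Real.sin (ω * s) + 2 * ω ^ 2 * c3 * Real.cos (ω * s)) / σp ^ 2)
        (ω ^ 2 * ((2 * ω * c1 * Real.cos (ω * t) - 2 * ω * c3 * Real.sin (ω * t)) / σp ^ 2)) t ∧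
      HasDerivAt (fun s : ℝ =>
          (2 * ω * c1 * Real.cos (ω * s) - 2 * ω * c3 * Real.sin (ω * s)) / σp ^ 2)
        (-((2 * ω ^ 2 * c1 * Real.sin (ω * t) + 2 * ω ^ 2 * c3 * Real.cos (ω * t)) / σp ^ 2)) t ∧
      HasDerivAt (fun s : ℝ =>
          (c1 * s + c2) * Real.sin (ω * s) + (c3 * s + c4) * Real.cos (ω * s))
        (c1 * Real.sin (ω * t) + ω * (c1 * t + c2) * Real.cos (ω * t) +
          c3 * Real.cos (ω * t) - ω * (c3 * t + c4) * Real.sin (ω * t)) t ∧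
      HasDerivAt (fun s : ℝ =>
          c1 * Real.sin (ω * s) + ω * (c1 * s + c2) * Real.cos (ω * s) +
            c3 * Real.cos (ω * s) - ω * (c3 * s + c4) * Real.sin (ω * s))
        (-ω ^ 2 * ((c1 * t + c2) * Real.sin (ω * t) + (c3 * t + c4) * Real.cos (ω * t)) +
          (2 * ω * c1 * Real.cos (ω * t) - 2 * ω * c3 * Real.sin (ω * t))) t) :=
  harmonic_oscillator_optimal_spline_general σp ω tk tk1 hσp hω
end
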